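/- Guaranteed decrease per backtracking-Armijo Gauss–Newton iteration: assume (A2) and (A4), suppose ∇𝒥 is Lipschitz continuous with constant L > 0, let β, τ ∈ (0,1) and α₀ > 0. Fix v ∈ ℝ^n with ∇𝒥(v) ≠ 0, let s solve J(v)ᵀJ(v) s = −J(v)ᵀ r(v), and let α > 0 satisfy the Armijo condition 𝒥(v + αs) ≤ 𝒥(v) + β·α·(sᵀ∇𝒥(v)), where either α = α₀ or the Armijo condition fails at stepsize α/τ. Then 𝒥(v) − 𝒥(v + αs) ≥ (β/L_r²) · min{ α₀, 2τ(1−β)ν²/L } · ‖∇𝒥(v)‖². -/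

import Mathlib

open scoped RealInnerProductSpace

/-- The nonlinear least-squares objective `𝒥(v) = (1/2)‖r(v)‖²`. -/
noncomputable def nlsObj {n m : ℕ} (r : EuclideanSpace ℝ (Fin n) → EuclideanSpace ℝ (Fin m))
    (v : EuclideanSpace ℝ (Fin n)) : ℝ :=
  (1 / 2) * ‖r v‖ ^ 2

/-- The Jacobian `J(v)` of `r` at `v`, as a continuous linear map. -/
noncomputable def nlsJ {n m : ℕ} (r : EuclideanSpace ℝ (Fin n) → EuclideanSpace ℝ (Fin m))
    (v : EuclideanSpace ℝ (Fin n)) :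
    EuclideanSpace ℝ (Fin n) →L[ℝ] EuclideanSpace ℝ (Fin m) :=
  fderiv ℝ r v

/-- The gradient `∇𝒥(v) = J(v)ᵀ r(v)`. -/
noncomputable def nlsGrad {n m : ℕ} (r : EuclideanSpace ℝ (Fin n) → EuclideanSpace ℝ (Fin m))
    (v : EuclideanSpace ℝ (Fin n)) : EuclideanSpace ℝ (Fin n) :=
  ContinuousLinearMap.adjoint (nlsJ r v) (r v)

/-! The Gauss–Newton step `s` satisfies `⟪s, ∇𝒥(v)⟫ = -‖J s‖²` and
`‖∇𝒥(v)‖ = ‖Jᵀ J s‖ ≤ L_r ‖J s‖`, so the Armijo condition yields a decrease of at least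
`β α ‖J s‖² ≥ (β α / L_r²) ‖∇𝒥(v)‖²`. It remains to bound `α` from below: either `α = α₀`, or
the Armijo test failed at `α / τ`, which by the descent lemma
`𝒥(v + w) ≤ 𝒥(v) + ⟪∇𝒥(v), w⟫ + (L / 2) ‖w‖²` and by `‖J s‖ ≥ ν ‖s‖` forces
`α / τ > 2 (1 - β) ν² / L`. -/

section Descent

variable {E : Type*} [NormedAddCommGroup E] [InnerProductSpace ℝ E] [CompleteSpace E]
  {f : E → ℝ} {g : E → E} {L : ℝ}

theorem HasGradientAt.hasDerivAt_comp_add_smul {g' x w : E} {t : ℝ}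
    (hf : HasGradientAt f g' (x + t • w)) :
    HasDerivAt (fun t : ℝ => f (x + t • w)) ⟪g', w⟫ t := by
  have hline : HasDerivAt (fun t : ℝ => x + t • w) w t := by
    simpa using ((hasDerivAt_id t).smul_const w).const_add x
  have := (hasGradientAt_iff_hasFDerivAt.mp hf).comp_hasDerivAt t hline
  rwa [InnerProductSpace.toDual_apply_apply] at this

theorem image_add_le_of_lipschitz_gradient (hf : ∀ x, HasGradientAt f (g x) x)
    (hg : ∀ x y, ‖g x - g y‖ ≤ L * ‖x - y‖) (x w : E) :
    f (x + w) ≤ f x + ⟪g x, w⟫ + L / 2 * ‖w‖ ^ 2 := by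
  set ψ : ℝ → ℝ := fun t => f (x + t • w) - t * ⟪g x, w⟫ - L / 2 * ‖w‖ ^ 2 * t ^ 2
  have hψ : ∀ t, HasDerivAt ψ (⟪g (x + t • w) - g x, w⟫ - L * ‖w‖ ^ 2 * t) t := by
    intro t
    refine (((hf (x + t • w)).hasDerivAt_comp_add_smul.sub
      ((hasDerivAt_id t).mul_const ⟪g x, w⟫)).sub
      ((hasDerivAt_pow 2 t).const_mul (L / 2 * ‖w‖ ^ 2))).congr_deriv ?_
    rw [inner_sub_left]
    push_cast
    ring
  have hψ_nonpos : ∀ t, 0 ≤ t → ⟪g (x + t • w) - g x, w⟫ - L * ‖w‖ ^ 2 * t ≤ 0 := by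
    intro t ht
    rw [sub_nonpos]
    calc ⟪g (x + t • w) - g x, w⟫ ≤ ‖g (x + t • w) - g x‖ * ‖w‖ := real_inner_le_norm _ _
      _ ≤ L * ‖t • w‖ * ‖w‖ := by
          gcongr
          simpa using hg (x + t • w) x
      _ = L * ‖w‖ ^ 2 * t := by rw [norm_smul, Real.norm_of_nonneg ht]; ring
  have hanti : AntitoneOn ψ (Set.Ici 0) :=
    antitoneOn_of_hasDerivWithinAt_nonpos (convex_Ici 0)
      (fun t _ => (hψ t).continuousAt.continuousWithinAt)
      (fun t _ => (hψ t).hasDerivWithinAt)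
      (fun t ht => hψ_nonpos t (interior_subset ht))
  have := hanti Set.self_mem_Ici (Set.mem_Ici.mpr zero_le_one) zero_le_one
  norm_num [ψ] at this
  linarith

theorem lt_mul_of_not_armijo (hf : ∀ x, HasGradientAt f (g x) x)
    (hg : ∀ x y, ‖g x - g y‖ ≤ L * ‖x - y‖) {x s : E} {β μ α : ℝ} (hβ : β ≤ 1) (hα : 0 < α)
    (hslope : ⟪s, g x⟫ ≤ -μ * ‖s‖ ^ 2)
    (hfail : ¬ f (x + α • s) ≤ f x + β * α * ⟪s, g x⟫) :
    2 * (1 - β) * μ < L * α := by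
  have hdescent := image_add_le_of_lipschitz_gradient hf hg x (α • s)
  rw [inner_smul_right, real_inner_comm, norm_smul, Real.norm_of_nonneg hα.le] at hdescent
  have hgap : 0 < (1 - β) * α * ⟪s, g x⟫ + L / 2 * (α * ‖s‖) ^ 2 := by linarith
  have hgap' : 0 < (α * ‖s‖ ^ 2) * (L * α - 2 * (1 - β) * μ) := by
    nlinarith [mul_le_mul_of_nonneg_left hslope (mul_nonneg (sub_nonneg.mpr hβ) hα.le)]
  linarith [pos_of_mul_pos_right hgap' (by positivity)]

end Descent

section NormalEquations

variable {E F : Type*} [NormedAddCommGroup E] [InnerProductSpace ℝ E] [CompleteSpace E]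
  [NormedAddCommGroup F] [InnerProductSpace ℝ F] [CompleteSpace F]
  {J : E →L[ℝ] F} {y : F} {s : E}

open ContinuousLinearMap

theorem inner_adjoint_eq_neg_norm_sq_of_normal_eq (hs : adjoint J (J s) = -adjoint J y) :
    ⟪s, adjoint J y⟫ = -‖J s‖ ^ 2 := by
  rw [← neg_neg (adjoint J y), ← hs, inner_neg_right, adjoint_inner_right,
    real_inner_self_eq_norm_sq]

theorem norm_adjoint_le_of_normal_eq (hs : adjoint J (J s) = -adjoint J y) :
    ‖adjoint J y‖ ≤ ‖J‖ * ‖J s‖ := by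
  set g := adjoint J y
  have hsq : ‖g‖ * ‖g‖ ≤ ‖J‖ * ‖J s‖ * ‖g‖ := calc
    ‖g‖ * ‖g‖ = -⟪J s, J g⟫ := by
      rw [← adjoint_inner_left, hs, inner_neg_left, neg_neg, real_inner_self_eq_norm_mul_norm]
    _ ≤ ‖J s‖ * ‖J g‖ := by
      rw [← inner_neg_right]
      exact (real_inner_le_norm _ _).trans_eq (by rw [norm_neg])
    _ ≤ ‖J‖ * ‖J s‖ * ‖g‖ := by
      rw [mul_comm ‖J‖, mul_assoc]
      gcongr
      exact J.le_opNorm g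
  rcases (norm_nonneg g).eq_or_lt with hg | hg
  · rw [← hg]; positivity
  · exact le_of_mul_le_mul_right hsq hg

end NormalEquations

theorem hasGradientAt_nlsObj {n m : ℕ} {r : EuclideanSpace ℝ (Fin n) → EuclideanSpace ℝ (Fin m)}
    {v : EuclideanSpace ℝ (Fin n)} (hr : DifferentiableAt ℝ r v) :
    HasGradientAt (nlsObj r) (nlsGrad r v) v := by
  rw [hasGradientAt_iff_hasFDerivAt]
  refine (hr.hasFDerivAt.norm_sq.const_mul (1 / 2 : ℝ)).congr_fderiv ?_
  ext z
  simp [nlsGrad, nlsJ, ContinuousLinearMap.adjoint_inner_left]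

theorem gauss_newton_backtracking_armijo_iteration_decrease_general
    {n m : ℕ}
    (r : EuclideanSpace ℝ (Fin n) → EuclideanSpace ℝ (Fin m))
    (hr : ContDiff ℝ 1 r)
    -- (A2)
    (Lr : ℝ) (hLr : 0 < Lr) (hA2 : ∀ v w, ‖r v - r w‖ ≤ Lr * ‖v - w‖)
    -- (A4)
    (ν : ℝ) (hν : 0 < ν) (hA4 : ∀ v z, ν * ‖z‖ ≤ ‖nlsJ r v z‖)
    -- ∇𝒥 is Lipschitz continuous with constant L
    (L : ℝ) (hL : 0 < L)
    (hlip : ∀ v w, ‖nlsGrad r v - nlsGrad r w‖ ≤ L * ‖v - w‖)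
    (β τ : ℝ) (hβ : β ∈ Set.Ioo (0 : ℝ) 1) (hτ : τ ∈ Set.Ioo (0 : ℝ) 1)
    (α₀ : ℝ)
    (v : EuclideanSpace ℝ (Fin n))
    -- the Gauss–Newton step
    (s : EuclideanSpace ℝ (Fin n))
    (hstep : ContinuousLinearMap.adjoint (nlsJ r v) (nlsJ r v s) =
      -ContinuousLinearMap.adjoint (nlsJ r v) (r v))
    (α : ℝ) (hαpos : 0 < α)
    -- the Armijo condition holds at stepsize α
    (harmijo : nlsObj r (v + α • s) ≤ nlsObj r v + β * α * ⟪s, nlsGrad r v⟫)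
    -- and either α = α₀ or the Armijo condition fails at stepsize α/τ
    (hback : α = α₀ ∨
      ¬ (nlsObj r (v + (α / τ) • s) ≤ nlsObj r v + β * (α / τ) * ⟪s, nlsGrad r v⟫)) :
    (β / Lr ^ 2) * min α₀ (2 * τ * (1 - β) * ν ^ 2 / L) * ‖nlsGrad r v‖ ^ 2 ≤
      nlsObj r v - nlsObj r (v + α • s) := by
  obtain ⟨hβ0, hβ1⟩ := hβ
  have hslope : ⟪s, nlsGrad r v⟫ = -‖nlsJ r v s‖ ^ 2 :=
    inner_adjoint_eq_neg_norm_sq_of_normal_eq hstep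
  have hJ : ‖nlsJ r v‖ ≤ Lr := norm_fderiv_le_of_lip' ℝ hLr.le (.of_forall fun w => hA2 w v)
  have hgrad : ‖nlsGrad r v‖ ≤ Lr * ‖nlsJ r v s‖ :=
    (norm_adjoint_le_of_normal_eq hstep).trans (by gcongr)
  have hcurv : ⟪s, nlsGrad r v⟫ ≤ -ν ^ 2 * ‖s‖ ^ 2 := by
    rw [hslope, neg_mul, neg_le_neg_iff, ← mul_pow]
    exact pow_le_pow_left₀ (by positivity) (hA4 v s) 2
  have hα : min α₀ (2 * τ * (1 - β) * ν ^ 2 / L) ≤ α := by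
    rcases hback with rfl | hfail
    · exact min_le_left _ _
    · have := lt_mul_of_not_armijo (fun w => hasGradientAt_nlsObj (hr.differentiable one_ne_zero w))
        hlip hβ1.le (div_pos hαpos hτ.1) hcurv hfail
      refine (min_le_right _ _).trans ?_
      rw [div_le_iff₀ hL]
      rw [mul_div_assoc', lt_div_iff₀ hτ.1] at this
      linarith
  calc (β / Lr ^ 2) * min α₀ (2 * τ * (1 - β) * ν ^ 2 / L) * ‖nlsGrad r v‖ ^ 2
      ≤ (β / Lr ^ 2) * α * (Lr * ‖nlsJ r v s‖) ^ 2 := by gcongr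
    _ = β * α * ‖nlsJ r v s‖ ^ 2 := by field_simp
    _ ≤ nlsObj r v - nlsObj r (v + α • s) := by rw [hslope] at harmijo; linarith

/-- Guaranteed decrease per backtracking-Armijo Gauss–Newton iteration:
`𝒥(v) − 𝒥(v + αs) ≥ (β/L_r²) min{α₀, 2τ(1−β)ν²/L} ‖∇𝒥(v)‖²`. -/
theorem gauss_newton_backtracking_armijo_iteration_decrease
    {n m : ℕ} (hn : 0 < n) (hm : 0 < m)
    (r : EuclideanSpace ℝ (Fin n) → EuclideanSpace ℝ (Fin m))
    (hr : ContDiff ℝ 1 r)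
    -- (A2)
    (Lr : ℝ) (hLr : 0 < Lr) (hA2 : ∀ v w, ‖r v - r w‖ ≤ Lr * ‖v - w‖)
    -- (A4)
    (ν : ℝ) (hν : 0 < ν) (hA4 : ∀ v z, ν * ‖z‖ ≤ ‖nlsJ r v z‖)
    -- ∇𝒥 is Lipschitz continuous with constant L
    (L : ℝ) (hL : 0 < L)
    (hlip : ∀ v w, ‖nlsGrad r v - nlsGrad r w‖ ≤ L * ‖v - w‖)
    (β τ : ℝ) (hβ : β ∈ Set.Ioo (0 : ℝ) 1) (hτ : τ ∈ Set.Ioo (0 : ℝ) 1)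
    (α₀ : ℝ) (hα₀ : 0 < α₀)
    (v : EuclideanSpace ℝ (Fin n)) (hgrad : nlsGrad r v ≠ 0)
    -- the Gauss–Newton step
    (s : EuclideanSpace ℝ (Fin n))
    (hstep : ContinuousLinearMap.adjoint (nlsJ r v) (nlsJ r v s) =
      -ContinuousLinearMap.adjoint (nlsJ r v) (r v))
    (α : ℝ) (hαpos : 0 < α)
    -- the Armijo condition holds at stepsize α
    (harmijo : nlsObj r (v + α • s) ≤ nlsObj r v + β * α * ⟪s, nlsGrad r v⟫)
    -- and either α = α₀ or the Armijo condition fails at stepsize α/τ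
    (hback : α = α₀ ∨
      ¬ (nlsObj r (v + (α / τ) • s) ≤ nlsObj r v + β * (α / τ) * ⟪s, nlsGrad r v⟫)) :
    (β / Lr ^ 2) * min α₀ (2 * τ * (1 - β) * ν ^ 2 / L) * ‖nlsGrad r v‖ ^ 2 ≤
      nlsObj r v - nlsObj r (v + α • s) :=
  gauss_newton_backtracking_armijo_iteration_decrease_general r hr Lr hLr hA2 ν hν hA4 L hL hlip β τ
    hβ hτ α₀ v s hstep α hαpos harmijo hback
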